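/- Let δ be the usual y-derivative on R = 𝕆[y] and T = R[x; id, δ] the non-associative differential operator ring. Then y ∈ N(T): y associates with all pairs of elements of T in every position. -/

import Mathlib

/-- The octonions, realized via the Cayley–Dickson doubling of the real quaternions. -/
def Octonion : Type := Quaternion ℝ × Quaternion ℝ

noncomputable instance : AddCommGroup Octonion :=
  inferInstanceAs (AddCommGroup (Quaternion ℝ × Quaternion ℝ))

noncomputable instance : Module ℝ Octonion :=
  inferInstanceAs (Module ℝ (Quaternion ℝ × Quaternion ℝ))

/-- Cayley–Dickson multiplication on pairs of quaternions. -/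
noncomputable def Octonion.omul (a b : Quaternion ℝ × Quaternion ℝ) :
    Quaternion ℝ × Quaternion ℝ :=
  (a.1 * b.1 - star b.2 * a.2, b.2 * a.1 + a.2 * star b.1)

noncomputable instance : One Octonion := ⟨((1 : Quaternion ℝ), (0 : Quaternion ℝ))⟩

theorem Octonion.omul_add (a b c : Quaternion ℝ × Quaternion ℝ) :
    Octonion.omul a (b + c) = Octonion.omul a b + Octonion.omul a c := by
  unfold Octonion.omul
  refine Prod.ext ?_ ?_ <;>
    simp only [Prod.fst_add, Prod.snd_add, mul_add, add_mul, star_add] <;> abel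

theorem Octonion.add_omul (a b c : Quaternion ℝ × Quaternion ℝ) :
    Octonion.omul (a + b) c = Octonion.omul a c + Octonion.omul b c := by
  unfold Octonion.omul
  refine Prod.ext ?_ ?_ <;>
    simp only [Prod.fst_add, Prod.snd_add, mul_add, add_mul, star_add] <;> abel

theorem Octonion.zero_omul (a : Quaternion ℝ × Quaternion ℝ) :
    Octonion.omul 0 a = 0 := by
  unfold Octonion.omul; refine Prod.ext ?_ ?_ <;> simp

theorem Octonion.omul_zero (a : Quaternion ℝ × Quaternion ℝ) :
    Octonion.omul a 0 = 0 := by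
  unfold Octonion.omul; refine Prod.ext ?_ ?_ <;> simp

noncomputable instance : NonUnitalNonAssocRing Octonion :=
  { (inferInstanceAs (AddCommGroup Octonion) : AddCommGroup Octonion) with
    mul := Octonion.omul
    left_distrib := fun a b c => Octonion.omul_add a b c
    right_distrib := fun a b c => Octonion.add_omul a b c
    zero_mul := fun a => Octonion.zero_omul a
    mul_zero := fun a => Octonion.omul_zero a }

/-- `R = 𝕆[y]`, the polynomial ring over the octonions, as finitely supported
sequences of octonion coefficients. -/
noncomputable abbrev OctPoly : Type := ℕ →₀ Octonion

/-- The convolution product on `𝕆[y]`. -/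
noncomputable instance : Mul OctPoly :=
  ⟨fun p q => p.sum fun i a => q.sum fun j b => Finsupp.single (i + j) (a * b)⟩

theorem OctPoly.mul_zero (a : OctPoly) : a * (0 : OctPoly) = 0 := by
  show (Finsupp.sum a fun i c => Finsupp.sum 0 fun j b => Finsupp.single (i + j) (c * b)) = 0
  simp

/-- The variable `y` of `𝕆[y]`. -/
noncomputable def Yv : OctPoly := Finsupp.single 1 (1 : Octonion)

/-- The constant polynomial `1` of `𝕆[y]`. -/
noncomputable def oneR : OctPoly := Finsupp.single 0 (1 : Octonion)

/-- The `y`-degree of a polynomial in `𝕆[y]` (with junk value `0` at `0`). -/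
def degy (r : OctPoly) : ℕ := WithBot.unbotD 0 (r.support.max)

/-- The underlying additive group of the Ore extension `S = R[x; σ, δ]`:
finitely supported sequences of coefficients in `R = 𝕆[y]`. -/
noncomputable abbrev OrePoly : Type := ℕ →₀ OctPoly

/-- Left multiplication by `x` in `R[x; σ, δ]`, determined by
`x·(r xʲ) = σ(r) x^(j+1) + δ(r) xʲ`. -/
noncomputable def xmul (σ δ : OctPoly →+ OctPoly) : OrePoly →+ OrePoly :=
  Finsupp.liftAddHom fun j =>
    (Finsupp.singleAddHom (j + 1)).comp σ + (Finsupp.singleAddHom j).comp δ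

/-- The multiplication of the non-associative Ore extension `R[x; σ, δ]`:
`(Σᵢ aᵢ xⁱ)·q = Σᵢ aᵢ·(xⁱ·q)`, where `xⁱ` acts via iterated `xmul` and `aᵢ`
multiplies every coefficient from the left. -/
noncomputable def oreMul (σ δ : OctPoly →+ OctPoly) (p q : OrePoly) : OrePoly :=
  p.sum fun i a => Finsupp.mapRange (a * ·) (OctPoly.mul_zero a) ((xmul σ δ)^[i] q)

/-- The constant `1 = 1·x⁰` of the Ore extension. -/
noncomputable def oneS : OrePoly := Finsupp.single 0 oneR

/-- The `x`-degree of an element of the Ore extension, valued in `ℤ ∪ {-∞}`. -/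
def xdeg (p : OrePoly) : WithBot ℤ := (p.support.max).map (Nat.cast : ℕ → ℤ)

/-- `σ` is a unital `ℝ`-algebra endomorphism of `𝕆[y]`. -/
def IsAlgEndo (σ : OctPoly →+ OctPoly) : Prop :=
  (∀ p q : OctPoly, σ (p * q) = σ p * σ q) ∧ σ oneR = oneR ∧
    (∀ (r : ℝ) (p : OctPoly), σ (r • p) = r • σ p)

/-- `δ` is a `σ`-derivation of `𝕆[y]`. -/
def IsSigmaDerivation (σ δ : OctPoly →+ OctPoly) : Prop :=
  (∀ p q : OctPoly, δ (p * q) = σ p * δ q + δ p * q) ∧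
    (∀ (r : ℝ) (p : OctPoly), δ (r • p) = r • δ p)

/-- An element of `𝕆` is real if it is a real multiple of `1`. -/
def Octonion.IsReal (c : Octonion) : Prop := ∃ r : ℝ, c = r • (1 : Octonion)

/-- Membership in the nucleus of the Ore extension `R[x; σ, δ]`. -/
def OreNucleus (σ δ : OctPoly →+ OctPoly) (a : OrePoly) : Prop :=
  (∀ b c : OrePoly, oreMul σ δ a (oreMul σ δ b c) = oreMul σ δ (oreMul σ δ a b) c) ∧
  (∀ b c : OrePoly, oreMul σ δ (oreMul σ δ b a) c = oreMul σ δ b (oreMul σ δ a c)) ∧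
  (∀ b c : OrePoly, oreMul σ δ (oreMul σ δ b c) a = oreMul σ δ b (oreMul σ δ c a))

/-- The identity endomorphism of `𝕆[y]`. -/
noncomputable def idR : OctPoly →+ OctPoly := AddMonoidHom.id OctPoly

/-- The usual `y`-derivative `d/dy` on `𝕆[y]`: `c·yʲ ↦ (j·c)·y^(j-1)`. -/
noncomputable def derivR : OctPoly →+ OctPoly :=
  Finsupp.liftAddHom fun j =>
    (Finsupp.singleAddHom (j - 1)).comp (j • AddMonoidHom.id Octonion)

/-- `y`, viewed as a degree-zero element of `T = 𝕆[y][x; id, d/dy]`. -/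
noncomputable def yT : OrePoly := Finsupp.single 0 Yv

/-!
In `T`, left multiplication by `y` is coefficientwise multiplication by `y ∈ 𝕆[y]`, and `y` is
central and associates with everything in `𝕆[y]`. The Leibniz rule `δ(y r) = y δ(r) + r` gives
`x y = y x + 1`, hence `xⁱ y = y xⁱ + i xⁱ⁻¹`, and right multiplication by `y` commutes with `x`
and with left multiplication by coefficients. Each associator with `y` in one slot is additive
in the first remaining argument `b`, and for `b = r xⁱ` these relations reduce it to associativity
involving `y` in `𝕆[y]`.
-/

open Finsupp

theorem Octonion.one_mul (b : Octonion) : (1 : Octonion) * b = b := by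
  show Octonion.omul (1, 0) b = b
  refine Prod.ext ?_ ?_ <;> simp [Octonion.omul]

theorem Octonion.mul_one (b : Octonion) : b * (1 : Octonion) = b := by
  show Octonion.omul b (1, 0) = b
  refine Prod.ext ?_ ?_ <;> simp [Octonion.omul]

theorem OctPoly.mul_def (p q : OctPoly) :
    p * q = p.sum fun i a => q.sum fun j b => single (i + j) (a * b) := rfl

theorem OctPoly.zero_mul (q : OctPoly) : (0 : OctPoly) * q = 0 :=
  sum_zero_index

theorem OctPoly.single_mul_single (i j : ℕ) (a b : Octonion) :
    (single i a : OctPoly) * single j b = single (i + j) (a * b) := by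
  rw [OctPoly.mul_def, sum_single_index (by simp), sum_single_index (by simp)]

theorem OctPoly.mul_add (p q r : OctPoly) : p * (q + r) = p * q + p * r := by
  simp only [OctPoly.mul_def, ← sum_add]
  refine sum_congr fun i _ => sum_add_index' (fun j => ?_) (fun j b b' => ?_)
  · rw [MulZeroClass.mul_zero, single_zero]
  · rw [_root_.mul_add, single_add]

theorem OctPoly.add_mul (p q r : OctPoly) : (p + q) * r = p * r + q * r := by
  simp only [OctPoly.mul_def]
  refine sum_add_index' (fun i => Finset.sum_eq_zero fun j _ => ?_) (fun i a a' => ?_)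
  · simp only [MulZeroClass.zero_mul, single_zero]
  · rw [← sum_add]
    exact sum_congr fun j _ => by rw [_root_.add_mul, single_add]

theorem OctPoly.Yv_mul_single (j : ℕ) (b : Octonion) : Yv * single j b = single (j + 1) b := by
  rw [Yv, OctPoly.single_mul_single, Octonion.one_mul, add_comm]

theorem OctPoly.single_mul_Yv (j : ℕ) (b : Octonion) : single j b * Yv = single (j + 1) b := by
  rw [Yv, OctPoly.single_mul_single, Octonion.mul_one]

theorem OctPoly.mul_oneR (p : OctPoly) : p * oneR = p := by
  induction p using Finsupp.induction_linear with
  | zero => exact OctPoly.zero_mul oneR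
  | add f g hf hg => rw [OctPoly.add_mul, hf, hg]
  | single j b => rw [oneR, OctPoly.single_mul_single, Octonion.mul_one, add_zero]

theorem OctPoly.Yv_mul_comm (p : OctPoly) : Yv * p = p * Yv := by
  induction p using Finsupp.induction_linear with
  | zero => rw [OctPoly.mul_zero, OctPoly.zero_mul]
  | add f g hf hg => rw [OctPoly.mul_add, OctPoly.add_mul, hf, hg]
  | single j b => rw [OctPoly.Yv_mul_single, OctPoly.single_mul_Yv]

theorem OctPoly.mul_Yv_mul (p q : OctPoly) : p * Yv * q = p * (Yv * q) := by
  induction p using Finsupp.induction_linear with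
  | zero => simp only [OctPoly.zero_mul]
  | add f g hf hg => simp only [OctPoly.add_mul, hf, hg]
  | single j b =>
    induction q using Finsupp.induction_linear with
    | zero => simp only [OctPoly.mul_zero]
    | add f g hf hg => simp only [OctPoly.mul_add, hf, hg]
    | single k c =>
      rw [OctPoly.single_mul_Yv, OctPoly.Yv_mul_single, OctPoly.single_mul_single,
        OctPoly.single_mul_single, add_right_comm, add_assoc]

theorem OctPoly.mul_mul_Yv (p q : OctPoly) : p * q * Yv = p * (q * Yv) := by
  induction p using Finsupp.induction_linear with
  | zero => simp only [OctPoly.zero_mul]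
  | add f g hf hg => simp only [OctPoly.add_mul, hf, hg]
  | single j b =>
    induction q using Finsupp.induction_linear with
    | zero => simp only [OctPoly.mul_zero, OctPoly.zero_mul]
    | add f g hf hg => simp only [OctPoly.mul_add, OctPoly.add_mul, hf, hg]
    | single k c =>
      rw [OctPoly.single_mul_single, OctPoly.single_mul_Yv, OctPoly.single_mul_Yv,
        OctPoly.single_mul_single, add_assoc]

theorem OctPoly.Yv_mul_mul (p q : OctPoly) : Yv * p * q = Yv * (p * q) := by
  rw [OctPoly.Yv_mul_comm, OctPoly.mul_Yv_mul, OctPoly.Yv_mul_comm q, ← OctPoly.mul_mul_Yv,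
    OctPoly.Yv_mul_comm]

theorem idR_apply (r : OctPoly) : idR r = r := rfl

theorem derivR_single (j : ℕ) (b : Octonion) :
    derivR (single j b) = single (j - 1) (j • b) :=
  liftAddHom_apply_single _ _ _

theorem derivR_Yv : derivR Yv = oneR := by
  rw [Yv, derivR_single, oneR, one_smul]

theorem derivR_oneR : derivR oneR = 0 := by
  rw [oneR, derivR_single, zero_smul, single_zero]

theorem derivR_Yv_mul (p : OctPoly) : derivR (Yv * p) = Yv * derivR p + p := by
  induction p using Finsupp.induction_linear with
  | zero => rw [OctPoly.mul_zero, map_zero, OctPoly.mul_zero, add_zero]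
  | add f g hf hg =>
    rw [OctPoly.mul_add, map_add, map_add, hf, hg, OctPoly.mul_add]
    abel
  | single j b =>
    rw [OctPoly.Yv_mul_single, derivR_single, derivR_single]
    cases j with
    | zero => rw [zero_smul, single_zero, OctPoly.mul_zero, zero_add, zero_add, one_smul]
    | succ k =>
      rw [Nat.add_sub_cancel, Nat.add_sub_cancel, OctPoly.Yv_mul_single, ← single_add,
        succ_nsmul]

theorem derivR_mul_Yv (p : OctPoly) : derivR (p * Yv) = derivR p * Yv + p := by
  rw [← OctPoly.Yv_mul_comm, derivR_Yv_mul, OctPoly.Yv_mul_comm]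

noncomputable def coeffMulLeft (r : OctPoly) : OrePoly →+ OrePoly :=
  mapRange.addMonoidHom (AddMonoidHom.mk' (r * ·) (OctPoly.mul_add r))

theorem coeffMulLeft_apply (r : OctPoly) (q : OrePoly) (n : ℕ) :
    coeffMulLeft r q n = r * q n :=
  mapRange_apply (hf := map_zero _)

theorem coeffMulLeft_single (r : OctPoly) (k : ℕ) (s : OctPoly) :
    coeffMulLeft r (single k s) = single k (r * s) :=
  mapRange_single (hf := map_zero _)

theorem coeffMulLeft_zero (q : OrePoly) : coeffMulLeft 0 q = 0 :=
  Finsupp.ext fun n => by rw [coeffMulLeft_apply, OctPoly.zero_mul, Finsupp.zero_apply]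

theorem coeffMulLeft_add (r r' : OctPoly) (q : OrePoly) :
    coeffMulLeft (r + r') q = coeffMulLeft r q + coeffMulLeft r' q :=
  Finsupp.ext fun n => by
    rw [Finsupp.add_apply, coeffMulLeft_apply, coeffMulLeft_apply, coeffMulLeft_apply,
      OctPoly.add_mul]

section OreExtension

variable (σ δ : OctPoly →+ OctPoly)

theorem xmul_single (j : ℕ) (r : OctPoly) :
    xmul σ δ (single j r) = single (j + 1) (σ r) + single j (δ r) :=
  liftAddHom_apply_single _ _ _

theorem single_oreMul (i : ℕ) (r : OctPoly) (q : OrePoly) :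
    oreMul σ δ (single i r) q = coeffMulLeft r ((xmul σ δ)^[i] q) :=
  sum_single_index (coeffMulLeft_zero _)

theorem zero_oreMul (q : OrePoly) : oreMul σ δ 0 q = 0 :=
  sum_zero_index

theorem add_oreMul (p p' q : OrePoly) :
    oreMul σ δ (p + p') q = oreMul σ δ p q + oreMul σ δ p' q :=
  sum_add_index' (fun _ => coeffMulLeft_zero _) (fun _ _ _ => coeffMulLeft_add _ _ _)

theorem nsmul_oreMul (n : ℕ) (p q : OrePoly) :
    oreMul σ δ (n • p) q = n • oreMul σ δ p q := by
  induction n with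
  | zero => rw [zero_smul, zero_smul, zero_oreMul]
  | succ n ih => rw [succ_nsmul, succ_nsmul, add_oreMul, ih]

end OreExtension

local notation "xT" => xmul idR derivR

local infixl:70 " ⋆ " => oreMul idR derivR

theorem yT_oreMul (q : OrePoly) : yT ⋆ q = coeffMulLeft Yv q :=
  single_oreMul _ _ 0 Yv q

theorem coeffMulLeft_Yv_mul (r : OctPoly) (q : OrePoly) :
    coeffMulLeft (Yv * r) q = coeffMulLeft Yv (coeffMulLeft r q) :=
  Finsupp.ext fun n => by simp only [coeffMulLeft_apply, OctPoly.Yv_mul_mul]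

theorem coeffMulLeft_mul_Yv (r : OctPoly) (q : OrePoly) :
    coeffMulLeft (r * Yv) q = coeffMulLeft r (coeffMulLeft Yv q) :=
  Finsupp.ext fun n => by simp only [coeffMulLeft_apply, OctPoly.mul_Yv_mul]

theorem xmul_coeffMulLeft_Yv (q : OrePoly) :
    xT (coeffMulLeft Yv q) = coeffMulLeft Yv (xT q) + q := by
  induction q using Finsupp.induction_linear with
  | zero => simp only [map_zero, add_zero]
  | add f g hf hg =>
    simp only [map_add, hf, hg]
    abel
  | single j s =>
    simp only [coeffMulLeft_single, xmul_single, idR_apply, derivR_Yv_mul,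
      single_add, map_add]
    abel

theorem iterate_xmul_coeffMulLeft_Yv (i : ℕ) (q : OrePoly) :
    xT^[i + 1] (coeffMulLeft Yv q) = coeffMulLeft Yv (xT^[i + 1] q) + (i + 1) • xT^[i] q := by
  induction i generalizing q with
  | zero => rw [zero_add, one_smul]; exact xmul_coeffMulLeft_Yv q
  | succ k ih =>
    rw [Function.iterate_succ_apply' _ (k + 1), ih, map_add, map_nsmul, xmul_coeffMulLeft_Yv,
      ← Function.iterate_succ_apply' xT (k + 1), ← Function.iterate_succ_apply' xT k,
      succ_nsmul _ (k + 1)]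
    abel

theorem single_sub_one_add_one_nsmul {M : Type*} [AddCommMonoid M] (j : ℕ) (v : M) :
    (single (j - 1 + 1) (j • v) : ℕ →₀ M) = single j (j • v) := by
  cases j with
  | zero => rw [zero_smul, single_zero, single_zero]
  | succ k => rw [Nat.add_sub_cancel]

theorem iterate_xmul_yT (j : ℕ) : xT^[j] yT = single j Yv + j • single (j - 1) oneR := by
  induction j with
  | zero => rw [zero_smul, add_zero]; rfl
  | succ k ih =>
    rw [Function.iterate_succ_apply', ih, map_add, map_nsmul, xmul_single, xmul_single,
      idR_apply, idR_apply, derivR_Yv, derivR_oneR, single_zero, add_zero, smul_single,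
      smul_single, single_sub_one_add_one_nsmul, Nat.add_sub_cancel, succ_nsmul, single_add]
    abel

theorem single_oreMul_yT (j : ℕ) (s : OctPoly) :
    single j s ⋆ yT = single j (s * Yv) + j • single (j - 1) s := by
  rw [single_oreMul, iterate_xmul_yT, map_add, map_nsmul, coeffMulLeft_single,
    coeffMulLeft_single, OctPoly.mul_oneR]

theorem xmul_oreMul_yT (q : OrePoly) : xT q ⋆ yT = xT (q ⋆ yT) := by
  induction q using Finsupp.induction_linear with
  | zero => simp only [map_zero, zero_oreMul]
  | add f g hf hg => simp only [map_add, add_oreMul, hf, hg]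
  | single j s =>
    simp only [xmul_single, idR_apply, add_oreMul, single_oreMul_yT, map_add, map_nsmul,
      derivR_mul_Yv, Nat.add_sub_cancel, smul_single, single_sub_one_add_one_nsmul, succ_nsmul, single_add]
    abel

theorem iterate_xmul_oreMul_yT (i : ℕ) (q : OrePoly) : xT^[i] q ⋆ yT = xT^[i] (q ⋆ yT) := by
  induction i generalizing q with
  | zero => rfl
  | succ k ih =>
    rw [Function.iterate_succ_apply', xmul_oreMul_yT, ih, ← Function.iterate_succ_apply' xT k]

theorem coeffMulLeft_oreMul_yT (r : OctPoly) (q : OrePoly) :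
    coeffMulLeft r q ⋆ yT = coeffMulLeft r (q ⋆ yT) := by
  induction q using Finsupp.induction_linear with
  | zero => simp only [map_zero, zero_oreMul]
  | add f g hf hg => simp only [map_add, add_oreMul, hf, hg]
  | single k s =>
    simp only [coeffMulLeft_single, single_oreMul_yT, map_add, map_nsmul, OctPoly.mul_mul_Yv]

theorem yT_oreMul_assoc (b c : OrePoly) : yT ⋆ (b ⋆ c) = (yT ⋆ b) ⋆ c := by
  rw [yT_oreMul, yT_oreMul]
  induction b using Finsupp.induction_linear with
  | zero => simp only [zero_oreMul, map_zero]
  | add f g hf hg => simp only [add_oreMul, map_add, hf, hg]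
  | single i r => rw [single_oreMul, coeffMulLeft_single, single_oreMul, coeffMulLeft_Yv_mul]

theorem oreMul_yT_oreMul (b c : OrePoly) : (b ⋆ yT) ⋆ c = b ⋆ (yT ⋆ c) := by
  rw [yT_oreMul]
  induction b using Finsupp.induction_linear with
  | zero => simp only [zero_oreMul]
  | add f g hf hg => simp only [add_oreMul, hf, hg]
  | single i r =>
    rw [single_oreMul_yT, add_oreMul, nsmul_oreMul, single_oreMul, single_oreMul, single_oreMul,
      coeffMulLeft_mul_Yv]
    cases i with
    | zero => rw [zero_smul, add_zero, Function.iterate_zero_apply, Function.iterate_zero_apply]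
    | succ k => rw [Nat.add_sub_cancel, iterate_xmul_coeffMulLeft_Yv, map_add, map_nsmul]

theorem oreMul_assoc_yT (b c : OrePoly) : (b ⋆ c) ⋆ yT = b ⋆ (c ⋆ yT) := by
  induction b using Finsupp.induction_linear with
  | zero => simp only [zero_oreMul]
  | add f g hf hg => simp only [add_oreMul, hf, hg]
  | single i r =>
    rw [single_oreMul, coeffMulLeft_oreMul_yT, iterate_xmul_oreMul_yT, single_oreMul]

/-- Let `δ` be the usual `y`-derivative on `R = 𝕆[y]` and `T = R[x; id, δ]` the
non-associative differential operator ring.  Then `y ∈ N(T)`: `y` associates with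
all pairs of elements of `T` in every position. -/
theorem y_mem_nucleus : OreNucleus idR derivR yT :=
  ⟨yT_oreMul_assoc, oreMul_yT_oreMul, oreMul_assoc_yT⟩
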